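/- arXiv:1601.06927 — 3 statements merged into one kernel-verified Lean document; each statement's English description precedes it below -/
import Mathlib

section
/- For every α ∈ (0, 1/2), the function F_α(y) = (1 - αy)^α · (1 + (1-α)y)^{1-α} defined on the interval [0, 1/α] attains its maximum value (1/α - 1)^{1-2α}, i.e., F_α(y) ≤ (1/α - 1)^{1-2α} for all y ∈ [0, 1/α]. -/
theorem anyon_filling_factor_max (α : ℝ) (hα : 0 < α) (hα2 : α < 1/2)
    (y : ℝ) (hy0 : 0 ≤ y) (hy1 : y ≤ 1/α) :
    (1 - α * y) ^ α * (1 + (1 - α) * y) ^ (1 - α) ≤ (1/α - 1) ^ (1 - 2*α) := by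
  have hα1 : α < 1 := by linarith
  set a := 1 - α * y with ha_def
  set b := 1 + (1 - α) * y with hb_def
  set c := (1 - α) / α with hc_def
  have hcpos : 0 < c := div_pos (by linarith) hα
  have ha : 0 ≤ a := by
    have : α * y ≤ α * (1/α) := mul_le_mul_of_nonneg_left hy1 hα.le
    rw [mul_one_div, div_self hα.ne'] at this
    simp [ha_def]; linarith
  have hb : 0 ≤ b := by
    have : 0 ≤ (1 - α) * y := mul_nonneg (by linarith) hy0
    simp [hb_def]; linarith
  have key : (a * c) ^ α * (b / c) ^ (1 - α) ≤ 1 := by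
    have h := Real.geom_mean_le_arith_mean2_weighted hα.le (by linarith : (0:ℝ) ≤ 1 - α)
      (mul_nonneg ha hcpos.le) (div_nonneg hb hcpos.le) (by ring)
    have heq : α * (a * c) + (1 - α) * (b / c) = 1 := by
      have h1α : (1 - α) ≠ 0 := by linarith
      rw [ha_def, hb_def, hc_def]
      field_simp
      ring
    linarith [h, heq.le]
  have hrw : a ^ α * b ^ (1 - α) = ((a * c) ^ α * (b / c) ^ (1 - α)) * c ^ (1 - 2*α) := by
    rw [Real.mul_rpow ha hcpos.le, Real.div_rpow hb hcpos.le]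
    rw [div_eq_mul_inv, ← Real.rpow_neg hcpos.le]
    have : c ^ α * c ^ (-(1 - α)) * c ^ (1 - 2*α) = 1 := by
      rw [← Real.rpow_add hcpos, ← Real.rpow_add hcpos,
        show α + -(1 - α) + (1 - 2*α) = 0 by ring, Real.rpow_zero]
    calc a ^ α * b ^ (1 - α) = a ^ α * b ^ (1 - α) * (c ^ α * c ^ (-(1 - α)) * c ^ (1 - 2*α)) := by
          rw [this, mul_one]
      _ = a ^ α * c ^ α * (b ^ (1 - α) * c ^ (-(1 - α))) * c ^ (1 - 2*α) := by ring
  have hc1 : 1/α - 1 = c := by rw [hc_def]; field_simp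
  rw [hc1, hrw]
  calc ((a * c) ^ α * (b / c) ^ (1 - α)) * c ^ (1 - 2*α)
      ≤ 1 * c ^ (1 - 2*α) := mul_le_mul_of_nonneg_right key (Real.rpow_nonneg hcpos.le _)
    _ = c ^ (1 - 2*α) := one_mul _
end

section
/- Define h_ε(s) = s/(1 + εs) for s ≥ 0 and ε > 0. If s, t, s', t' ≥ 0 satisfy s' + t' = s + t, then h_ε(s') + h_ε(t') - h_ε(s) - h_ε(t) ≥ - ε s t (2 + ε(s+t)) / ((1 + εs)(1 + εt)(1 + ε(s+t))). In particular h_ε(s') + h_ε(t') - h_ε(s) - h_ε(t) ≥ -2ε s t / ((1 + εs)(1 + εt)). -/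
lemma hsub (ε a b : ℝ) (hε : 0 < ε) (ha : 0 ≤ a) (hb : 0 ≤ b) :
    (a + b) / (1 + ε * (a + b)) ≤ a / (1 + ε * a) + b / (1 + ε * b) := by
  have h1 : (0:ℝ) < 1 + ε * a := by positivity
  have h2 : (0:ℝ) < 1 + ε * b := by positivity
  have h3 : (0:ℝ) < 1 + ε * (a + b) := by positivity
  rw [div_add_div _ _ (ne_of_gt h1) (ne_of_gt h2), div_le_div_iff₀ h3 (by positivity)]
  nlinarith [mul_nonneg (mul_nonneg ha hb) hε.le, mul_nonneg (mul_nonneg (mul_nonneg ha hb) hε.le) hε.le, sq_nonneg ε, mul_nonneg (mul_nonneg ha hb) (mul_nonneg (mul_nonneg hε.le hε.le) hε.le)]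

theorem truncated_energy_estimate (ε s t s' t' : ℝ) (hε : 0 < ε)
    (hs : 0 ≤ s) (ht : 0 ≤ t) (hs' : 0 ≤ s') (ht' : 0 ≤ t')
    (hsum : s' + t' = s + t) :
    s' / (1 + ε * s') + t' / (1 + ε * t') - s / (1 + ε * s) - t / (1 + ε * t) ≥
      -(ε * s * t * (2 + ε * (s + t)) /
        ((1 + ε * s) * (1 + ε * t) * (1 + ε * (s + t)))) ∧
    s' / (1 + ε * s') + t' / (1 + ε * t') - s / (1 + ε * s) - t / (1 + ε * t) ≥
      -(2 * ε * s * t / ((1 + ε * s) * (1 + ε * t))) := by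
  have h1 : (0:ℝ) < 1 + ε * s := by positivity
  have h2 : (0:ℝ) < 1 + ε * t := by positivity
  have h3 : (0:ℝ) < 1 + ε * (s + t) := by positivity
  have key : s / (1 + ε * s) + t / (1 + ε * t) - (s + t) / (1 + ε * (s + t)) =
      ε * s * t * (2 + ε * (s + t)) /
        ((1 + ε * s) * (1 + ε * t) * (1 + ε * (s + t))) := by
    field_simp
    ring
  have hge := hsub ε s' t' hε hs' ht'
  rw [hsum] at hge
  have main : s' / (1 + ε * s') + t' / (1 + ε * t') - s / (1 + ε * s) - t / (1 + ε * t) ≥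
      -(ε * s * t * (2 + ε * (s + t)) /
        ((1 + ε * s) * (1 + ε * t) * (1 + ε * (s + t)))) := by
    rw [← key]; linarith
  refine ⟨main, le_trans ?_ main⟩
  rw [neg_le_neg_iff]
  rw [div_le_div_iff₀ (by positivity) (by positivity)]
  have hst : 0 ≤ ε * s * t := by positivity
  nlinarith [mul_nonneg hst h1.le, mul_nonneg (mul_nonneg hst h1.le) h2.le, mul_nonneg (mul_nonneg hst hε.le) (add_nonneg hs ht), mul_nonneg (mul_nonneg (mul_nonneg hst hε.le) (add_nonneg hs ht)) (mul_nonneg h1.le h2.le)]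
end

section
/- Let w ∈ ℝ² be a unit vector, let n ∈ ℝ² be a unit vector with γ' < |w·n| < 1 - γ' for some γ' ∈ (0, 1/2), and let n⊥ be a unit vector orthogonal to n. Then n₁²(w·n)² + (n⊥)₁²(w·n⊥)² ≥ γ'², where the subscript 1 denotes the first coordinate. -/
open scoped RealInnerProductSpace

private lemma bony_aux (w0 w1 n0 n1 p0 p1 γ' : ℝ)
    (hw2 : w0 ^ 2 + w1 ^ 2 = 1) (hn2 : n0 ^ 2 + n1 ^ 2 = 1)
    (hnp2 : p0 ^ 2 + p1 ^ 2 = 1) (horth : n0 * p0 + n1 * p1 = 0)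
    (hγ0 : 0 < γ') (hγ1 : γ' < 1/2)
    (h1 : γ' < |w0 * n0 + w1 * n1|) (h2 : |w0 * n0 + w1 * n1| < 1 - γ') :
    n0 ^ 2 * (w0 * n0 + w1 * n1) ^ 2 + p0 ^ 2 * (w0 * p0 + w1 * p1) ^ 2 ≥ γ' ^ 2 := by
  have key2 : (n0 * p0) ^ 2 = (n1 * p1) ^ 2 := by
    have key : n0 * p0 = -(n1 * p1) := by linarith
    rw [key]; ring
  have h5 : n0 ^ 2 = p1 ^ 2 := by
    linear_combination key2 - n0 ^ 2 * hnp2 + p1 ^ 2 * hn2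
  have h6 : p0 ^ 2 = n1 ^ 2 := by
    linear_combination key2 - p0 ^ 2 * hn2 + n1 ^ 2 * hnp2
  have hsum : n0 ^ 2 + p0 ^ 2 = 1 := by linarith
  have hsum2 : n1 ^ 2 + p1 ^ 2 = 1 := by linarith
  have t1 : (n0 * n1 + p0 * p1) * n0 = 0 := by
    linear_combination p1 * horth + n1 * h5
  have t2 : (n0 * n1 + p0 * p1) * p0 = 0 := by
    linear_combination n1 * horth + p1 * h6
  have hcross : n0 * n1 + p0 * p1 = 0 := by
    have hsq : (n0 * n1 + p0 * p1) ^ 2 = 0 := by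
      linear_combination (n0 * n1 + p0 * p1) * n0 * t1
        + (n0 * n1 + p0 * p1) * p0 * t2
        - (n0 * n1 + p0 * p1) ^ 2 * hsum
    exact sq_eq_zero_iff.mp hsq
  have hab : (w0 * n0 + w1 * n1) ^ 2 + (w0 * p0 + w1 * p1) ^ 2 = 1 := by
    linear_combination w0 ^ 2 * hsum + w1 ^ 2 * hsum2
      + 2 * (w0 * w1) * hcross + hw2
  set a := w0 * n0 + w1 * n1
  set b := w0 * p0 + w1 * p1
  have ha2 : γ' ^ 2 ≤ a ^ 2 := by nlinarith [sq_abs a, abs_nonneg a]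
  have ha3 : a ^ 2 < (1 - γ') ^ 2 := by nlinarith [sq_abs a, abs_nonneg a]
  have hb2 : γ' ^ 2 ≤ b ^ 2 := by nlinarith [mul_pos hγ0 (by linarith : (0:ℝ) < 1 - γ')]
  have e1 := mul_le_mul_of_nonneg_left ha2 (sq_nonneg n0)
  have e2 := mul_le_mul_of_nonneg_left hb2 (sq_nonneg p0)
  nlinarith [e1, e2, hsum]

theorem bony_geometric_lower_bound (w n np : EuclideanSpace ℝ (Fin 2))
    (hw : ‖w‖ = 1) (hn : ‖n‖ = 1) (hnp : ‖np‖ = 1) (horth : ⟪n, np⟫ = 0)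
    (γ' : ℝ) (hγ0 : 0 < γ') (hγ1 : γ' < 1/2)
    (h1 : γ' < |⟪w, n⟫|) (h2 : |⟪w, n⟫| < 1 - γ') :
    (n 0) ^ 2 * ⟪w, n⟫ ^ 2 + (np 0) ^ 2 * ⟪w, np⟫ ^ 2 ≥ γ' ^ 2 := by
  have inner_eq : ∀ x y : EuclideanSpace ℝ (Fin 2),
      ⟪x, y⟫ = x 0 * y 0 + x 1 * y 1 := by
    intro x y
    simp [PiLp.inner_apply, Fin.sum_univ_two, RCLike.inner_apply, mul_comm]
  have norm_sq : ∀ x : EuclideanSpace ℝ (Fin 2), ‖x‖ = 1 → x 0 ^ 2 + x 1 ^ 2 = 1 := by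
    intro x hx
    have h := real_inner_self_eq_norm_sq x
    rw [inner_eq, hx] at h
    nlinarith [h]
  have hw2 := norm_sq w hw
  have hn2 := norm_sq n hn
  have hnp2 := norm_sq np hnp
  rw [inner_eq] at horth
  simp only [inner_eq] at h1 h2 ⊢
  exact bony_aux (w 0) (w 1) (n 0) (n 1) (np 0) (np 1) γ' hw2 hn2 hnp2 horth hγ0 hγ1 h1 h2
end
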